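/- Let μ < 0 and q_u, q_d > 0. For every a ∈ ℝ there exists a unique b > a such that F(a,b) := (a+b) + 1/μ - 2(b e^{2μb} - a e^{2μa})/(e^{2μb} - e^{2μa}) + μ(q_u + q_d) = 0, provided F(a,b) → +∞ as b → ∞ and F(a,a⁺) < 0; moreover b - a is a constant C independent of a, i.e., F(a, a+C) = 0 for all a where C is the unique positive solution of C(1 + e^{2μC})/(1 - e^{2μC}) = -(q_d + q_u)μ - 1/μ (when such C exists). -/

import Mathlib

open Real Filter

lemma aux_id (μ t : ℝ) (hμ : μ < 0) (ht : 0 < t) :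
    t * (1 + exp (2 * μ * t)) / (1 - exp (2 * μ * t))
      = t * Real.cosh (-μ * t) / Real.sinh (-μ * t) := by
  have hspos : 0 < Real.sinh (-μ * t) := Real.sinh_pos_iff.2 (by nlinarith)
  have hE1 : exp (2 * μ * t) < 1 := by rw [Real.exp_lt_one_iff]; nlinarith
  have h1 : 1 - exp (2 * μ * t) ≠ 0 := by linarith
  have hEpos : (0:ℝ) < exp (μ * t) := Real.exp_pos _
  have hE : exp (2 * μ * t) = exp (μ * t) * exp (μ * t) := by
    rw [← Real.exp_add]; ring_nf
  have hcosh : Real.cosh (-μ * t) = ((exp (μ * t))⁻¹ + exp (μ * t)) / 2 := by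
    rw [Real.cosh_eq, ← Real.exp_neg]; ring_nf
  have hsinh : Real.sinh (-μ * t) = ((exp (μ * t))⁻¹ - exp (μ * t)) / 2 := by
    rw [Real.sinh_eq, ← Real.exp_neg]; ring_nf
  rw [div_eq_div_iff h1 (ne_of_gt hspos), hcosh, hsinh, hE]
  field_simp

lemma aux_mono (ν : ℝ) (hν : 0 < ν) :
    StrictMonoOn (fun t => t * Real.cosh (ν * t) / Real.sinh (ν * t)) (Set.Ioi 0) := by
  have hD : ∀ t ∈ Set.Ioi (0:ℝ), HasDerivAt (fun t => t * Real.cosh (ν * t) / Real.sinh (ν * t))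
      ((Real.sinh (ν*t) * Real.cosh (ν*t) - ν * t) / (Real.sinh (ν*t))^2) t := by
    intro t ht
    have ht' : 0 < t := ht
    have hs : Real.sinh (ν * t) ≠ 0 := ne_of_gt (Real.sinh_pos_iff.2 (by positivity))
    have hlin : HasDerivAt (fun t : ℝ => ν * t) ν t := by
      simpa using (hasDerivAt_id t).const_mul ν
    have hc : HasDerivAt (fun t => Real.cosh (ν * t)) (Real.sinh (ν * t) * ν) t :=
      (Real.hasDerivAt_cosh (ν * t)).comp t hlin
    have hnum : HasDerivAt (fun t => t * Real.cosh (ν * t))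
        (1 * Real.cosh (ν * t) + t * (Real.sinh (ν * t) * ν)) t :=
      (hasDerivAt_id t).mul hc
    have hden : HasDerivAt (fun t => Real.sinh (ν * t)) (Real.cosh (ν * t) * ν) t :=
      (Real.hasDerivAt_sinh (ν * t)).comp t hlin
    have := hnum.div hden hs
    refine this.congr_deriv ?_
    have hid : Real.cosh (ν*t) ^ 2 - Real.sinh (ν*t) ^ 2 = 1 := Real.cosh_sq_sub_sinh_sq _
    field_simp
    linear_combination (-(ν * t)) * hid
  have hpos : ∀ t ∈ interior (Set.Ioi (0:ℝ)), 0 < deriv (fun t => t * Real.cosh (ν * t) / Real.sinh (ν * t)) t := by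
    rw [interior_Ioi]
    intro t ht
    rw [(hD t ht).deriv]
    have ht' : (0:ℝ) < t := ht
    have h1 : ν * t < Real.sinh (ν * t) := Real.self_lt_sinh_iff.2 (by positivity)
    have h2 : 1 ≤ Real.cosh (ν * t) := Real.one_le_cosh _
    have h3 : 0 < Real.sinh (ν * t) := Real.sinh_pos_iff.2 (by positivity)
    have h4 : ν * t < Real.sinh (ν*t) * Real.cosh (ν*t) := by nlinarith
    apply div_pos (by linarith) (by positivity)
  exact strictMonoOn_of_deriv_pos (convex_Ioi 0)
    (fun t ht => ((hD t ht).differentiableAt.continuousAt).continuousWithinAt) hpos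

theorem stmt_7 (μ qu qd : ℝ) (hμ : μ < 0) (hqu : 0 < qu) (hqd : 0 < qd)
    (F : ℝ → ℝ → ℝ)
    (hF : ∀ a b, F a b = (a + b) + 1 / μ -
      2 * ((b * exp (2 * μ * b) - a * exp (2 * μ * a)) / (exp (2 * μ * b) - exp (2 * μ * a)))
      + μ * (qu + qd))
    (hlim : ∀ a, Tendsto (fun b => F a b) atTop atTop)
    (hneg : ∀ a, ∀ᶠ b in nhdsWithin a (Set.Ioi a), F a b < 0)
    (C : ℝ) (hCpos : 0 < C)
    (hC : C * (1 + exp (2 * μ * C)) / (1 - exp (2 * μ * C)) + (qd + qu) * μ + 1 / μ = 0) :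
    (∀ a : ℝ, ∃! b : ℝ, a < b ∧ F a b = 0) ∧ ∀ a : ℝ, F a (a + C) = 0 := by
  have hμ0 : μ ≠ 0 := ne_of_lt hμ
  -- key formula
  have hFk : ∀ a t : ℝ, 0 < t → F a (a + t)
      = t * (1 + exp (2 * μ * t)) / (1 - exp (2 * μ * t)) + (qd + qu) * μ + 1 / μ := by
    intro a t ht
    have hE1 : exp (2 * μ * t) < 1 := by rw [Real.exp_lt_one_iff]; nlinarith
    have h2 : 1 - exp (2 * μ * t) ≠ 0 := by linarith
    have hApos : (0:ℝ) < exp (2 * μ * a) := Real.exp_pos _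
    have hEpos : (0:ℝ) < exp (2 * μ * t) := Real.exp_pos _
    have hAE : exp (2 * μ * (a + t)) = exp (2 * μ * a) * exp (2 * μ * t) := by
      rw [← Real.exp_add]; ring_nf
    have h1 : exp (2 * μ * a) * exp (2 * μ * t) - exp (2 * μ * a) ≠ 0 := by nlinarith
    have h3 : exp (2 * μ * t) - 1 ≠ 0 := by linarith
    have h4 : -1 + exp (2 * μ * t) ≠ 0 := by linarith
    rw [hF, hAE]
    field_simp
    have h5 : 1 - rexp (t*μ*2) ≠ 0 := by rw [show t*μ*2 = 2*μ*t by ring]; exact h2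
    have h6 : rexp (t*μ*2) - 1 ≠ 0 := by rw [show t*μ*2 = 2*μ*t by ring]; exact h3
    field_simp
    ring
  have hgC : F 0 (0 + C) = 0 := by
    rw [hFk 0 C hCpos]; linarith [hC]
  have hFC : ∀ a : ℝ, F a (a + C) = 0 := by
    intro a; rw [hFk a C hCpos]; linarith [hC]
  refine ⟨fun a => ⟨a + C, ⟨by linarith, hFC a⟩, ?_⟩, hFC⟩
  rintro b ⟨hab, hFb⟩
  have ht : 0 < b - a := by linarith
  have hb : b = a + (b - a) := by ring
  rw [hb, hFk a (b - a) ht] at hFb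
  have hinj := (aux_mono (-μ) (by linarith)).injOn
  have h1 : (b - a) * Real.cosh (-μ * (b - a)) / Real.sinh (-μ * (b - a))
      = C * Real.cosh (-μ * C) / Real.sinh (-μ * C) := by
    rw [← aux_id μ (b - a) hμ ht, ← aux_id μ C hμ hCpos]
    linarith [hC, hFb]
  have : b - a = C := hinj (Set.mem_Ioi.2 ht) (Set.mem_Ioi.2 hCpos) h1
  linarith
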